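/- Suppose I contains a distinguished vertex ∞, let N = 2, and let (a^V,e^V) and (a^W,e^W) be A-module structures on I×{0,1,2}-graded spaces V and W with dim V_{i,n} = dim W_{i,n} for all (i,n), dim V_{∞,n} = 1 for all n, and every e^V_{i,n} invertible. Let θ' : ℤ^{I×{0,1,2}} → ℚ be a linear functional with θ'(dim V) = 0, and assume V and W are both θ'-stable. Then the restriction of ∂₀ to ⊕_{i∈I, i≠∞} Hom(V_{i,0},W_{i,0}) is injective; that is, if φ ∈ L(V₀,W₀) satisfies ∂₀(φ) = 0 and φ_∞ = 0, then φ = 0. -/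
import Mathlib


noncomputable section

open Module

section Maps

variable {I H : Type}
  (s t : H → I)
  (V W : I → ℕ → Type)
  [∀ i n, AddCommGroup (V i n)] [∀ i n, Module ℂ (V i n)]
  [∀ i n, AddCommGroup (W i n)] [∀ i n, Module ℂ (W i n)]
  (aV : ∀ (h : H) (n : ℕ), V (s h) n →ₗ[ℂ] V (t h) (n + 1))
  (aW : ∀ (h : H) (n : ℕ), W (s h) n →ₗ[ℂ] W (t h) (n + 1))
  (eW : ∀ (i : I) (n : ℕ), W i n →ₗ[ℂ] W i (n + 1))
  (eVinv : ∀ (i : I) (n : ℕ), V i (n + 1) →ₗ[ℂ] V i n)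

/-- The map `∂₀ : L(V₀,W₀) → E(V₀,W₁)`,
`∂₀(φ)_h = a^W_{h,0}∘φ_{s(h)} − e^W_{t(h),0}∘φ_{t(h)}∘(e^V_{t(h),0})⁻¹∘a^V_{h,0}`. -/
def d0 (φ : ∀ i, V i 0 →ₗ[ℂ] W i 0) : ∀ h, V (s h) 0 →ₗ[ℂ] W (t h) 1 :=
  fun h => aW h 0 ∘ₗ φ (s h) - eW (t h) 0 ∘ₗ φ (t h) ∘ₗ eVinv (t h) 0 ∘ₗ aV h 0

end Maps

/-- Cast of graded components of an `I × ℕ`-graded family of `ℂ`-vector spaces along an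
equality of vertices. -/
def lcastN {I : Type} (V : I → ℕ → Type)
    [∀ i n, AddCommGroup (V i n)] [∀ i n, Module ℂ (V i n)]
    (n : ℕ) {i j : I} (hij : i = j) : V i n ≃ₗ[ℂ] V j n := by
  subst hij; exact LinearEquiv.refl ℂ (V i n)

/-- The value of the linear functional on `ℤ^{I×{0,1,2}}` with coefficients `θc`. -/
def thetaVal {I : Type} [Fintype I] (θc : I → ℕ → ℚ) (d : I → ℕ → ℤ) : ℚ :=
  ∑ i : I, ∑ n ∈ Finset.range 3, θc i n * (d i n : ℚ)

/-- Propagation of a degree-0 morphism to all levels. -/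
def Phi {I : Type} (V W : I → ℕ → Type)
    [∀ i n, AddCommGroup (V i n)] [∀ i n, Module ℂ (V i n)]
    [∀ i n, AddCommGroup (W i n)] [∀ i n, Module ℂ (W i n)]
    (eW : ∀ (i : I) (n : ℕ), W i n →ₗ[ℂ] W i (n + 1))
    (eVinv : ∀ (i : I) (n : ℕ), V i (n + 1) →ₗ[ℂ] V i n)
    (φ : ∀ i, V i 0 →ₗ[ℂ] W i 0) : ∀ i n, V i n →ₗ[ℂ] W i n :=
  fun i n => Nat.rec (φ i) (fun m p => eW i m ∘ₗ p ∘ₗ eVinv i m) n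

/-- (`N = 2`, distinguished vertex `∞`.)  Under `θ'`-stability of both
`A`-modules, the restriction of `∂₀` to `⊕_{i ≠ ∞} Hom(V_{i,0}, W_{i,0})` is injective:
if `∂₀(φ) = 0` and `φ_∞ = 0` then `φ = 0`. -/
theorem stmt14
    {I H : Type} [Fintype I] [Fintype H] [DecidableEq I]
    (inf : I)
    (s t : H → I) (bar : H → H)
    (bar_invol : ∀ h, bar (bar h) = h) (bar_ne : ∀ h, bar h ≠ h)
    (s_bar : ∀ h, s (bar h) = t h) (t_bar : ∀ h, t (bar h) = s h)
    (eps : H → ℤ) (eps_pm : ∀ h, eps h = 1 ∨ eps h = -1)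
    (eps_bar : ∀ h, eps (bar h) = - eps h)
    (V W : I → ℕ → Type)
    [∀ i n, AddCommGroup (V i n)] [∀ i n, Module ℂ (V i n)]
    [∀ i n, FiniteDimensional ℂ (V i n)]
    [∀ i n, AddCommGroup (W i n)] [∀ i n, Module ℂ (W i n)]
    [∀ i n, FiniteDimensional ℂ (W i n)]
    (aV : ∀ (h : H) (n : ℕ), V (s h) n →ₗ[ℂ] V (t h) (n + 1))
    (eV : ∀ (i : I) (n : ℕ), V i n →ₗ[ℂ] V i (n + 1))
    (aW : ∀ (h : H) (n : ℕ), W (s h) n →ₗ[ℂ] W (t h) (n + 1))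
    (eW : ∀ (i : I) (n : ℕ), W i n →ₗ[ℂ] W i (n + 1))
    -- (R1) for V and W (N = 2, so only n = 0)
    (hR1V : ∀ (k : I) (n : ℕ), n + 2 ≤ 2 →
      (∑ h : H, if hk : s h = k then
        (eps h : ℂ) • ((lcastN V (n + 2) ((t_bar h).trans hk)).toLinearMap
          ∘ₗ aV (bar h) (n + 1) ∘ₗ (lcastN V (n + 1) (s_bar h)).symm.toLinearMap
          ∘ₗ aV h n ∘ₗ (lcastN V n hk).symm.toLinearMap) else 0) = 0)
    (hR1W : ∀ (k : I) (n : ℕ), n + 2 ≤ 2 →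
      (∑ h : H, if hk : s h = k then
        (eps h : ℂ) • ((lcastN W (n + 2) ((t_bar h).trans hk)).toLinearMap
          ∘ₗ aW (bar h) (n + 1) ∘ₗ (lcastN W (n + 1) (s_bar h)).symm.toLinearMap
          ∘ₗ aW h n ∘ₗ (lcastN W n hk).symm.toLinearMap) else 0) = 0)
    -- (R2) for V and W
    (hR2V : ∀ (h : H) (n : ℕ), n + 2 ≤ 2 →
      eV (t h) (n + 1) ∘ₗ aV h n = aV h (n + 1) ∘ₗ eV (s h) n)
    (hR2W : ∀ (h : H) (n : ℕ), n + 2 ≤ 2 →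
      eW (t h) (n + 1) ∘ₗ aW h n = aW h (n + 1) ∘ₗ eW (s h) n)
    -- the e^V are invertible, with inverses eVinv
    (eVinv : ∀ (i : I) (n : ℕ), V i (n + 1) →ₗ[ℂ] V i n)
    (hinv : ∀ (i : I) (n : ℕ), n + 1 ≤ 2 →
      eVinv i n ∘ₗ eV i n = LinearMap.id ∧ eV i n ∘ₗ eVinv i n = LinearMap.id)
    -- dimension hypotheses
    (hdim : ∀ i, ∀ n ≤ 2, finrank ℂ (V i n) = finrank ℂ (W i n))
    (hdiminf : ∀ n ≤ 2, finrank ℂ (V inf n) = 1)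
    -- the linear functional θ' (given by its coefficients), with θ'(dim V) = 0
    (θc : I → ℕ → ℚ)
    (hθV : thetaVal θc (fun i n => (finrank ℂ (V i n) : ℤ)) = 0)
    -- θ'-stability of V
    (hVstab : ∀ M : ∀ i n, Submodule ℂ (V i n),
      (∀ (h : H) (n : ℕ), n + 1 ≤ 2 → (M (s h) n).map (aV h n) ≤ M (t h) (n + 1)) →
      (∀ (i : I) (n : ℕ), n + 1 ≤ 2 → (M i n).map (eV i n) ≤ M i (n + 1)) →
      (∃ i, ∃ n ≤ 2, M i n ≠ ⊥) → (∃ i, ∃ n ≤ 2, M i n ≠ ⊤) →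
      0 < thetaVal θc (fun i n => (finrank ℂ (M i n) : ℤ)))
    -- θ'-stability of W
    (hWstab : ∀ M : ∀ i n, Submodule ℂ (W i n),
      (∀ (h : H) (n : ℕ), n + 1 ≤ 2 → (M (s h) n).map (aW h n) ≤ M (t h) (n + 1)) →
      (∀ (i : I) (n : ℕ), n + 1 ≤ 2 → (M i n).map (eW i n) ≤ M i (n + 1)) →
      (∃ i, ∃ n ≤ 2, M i n ≠ ⊥) → (∃ i, ∃ n ≤ 2, M i n ≠ ⊤) →
      0 < thetaVal θc (fun i n => (finrank ℂ (M i n) : ℤ))) :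
    ∀ φ : ∀ i, V i 0 →ₗ[ℂ] W i 0,
      d0 s t V W aV aW eW eVinv φ = 0 → φ inf = 0 → φ = 0 := by
  intro φ hd0 hφinf
  by_contra hφ
  obtain ⟨i0, hi0⟩ : ∃ i, φ i ≠ 0 := by
    by_contra hc; push_neg at hc; exact hφ (funext hc)
  set Φ : ∀ i n, V i n →ₗ[ℂ] W i n := Phi V W eW eVinv φ with hΦdef
  have hΦ0 : ∀ i, Φ i 0 = φ i := fun i => rfl
  have hΦS : ∀ i n, Φ i (n + 1) = eW i n ∘ₗ Φ i n ∘ₗ eVinv i n := fun i n => rfl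
  -- pointwise inverse facts
  have hie : ∀ (i : I) (n : ℕ), n + 1 ≤ 2 → ∀ x, eVinv i n (eV i n x) = x := by
    intro i n hn x
    have := congrArg (fun f => f x) (hinv i n hn).1
    simpa using this
  have hei : ∀ (i : I) (n : ℕ), n + 1 ≤ 2 → ∀ x, eV i n (eVinv i n x) = x := by
    intro i n hn x
    have := congrArg (fun f => f x) (hinv i n hn).2
    simpa using this
  -- Φ intertwines e
  have hΦe : ∀ (i : I) (n : ℕ), n + 1 ≤ 2 → ∀ x,
      Φ i (n + 1) (eV i n x) = eW i n (Φ i n x) := by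
    intro i n hn x
    rw [hΦS]
    simp [LinearMap.comp_apply, hie i n hn x]
  -- ∂₀(φ)=0 pointwise
  have hd0' : ∀ (h : H) (x : V (s h) 0),
      aW h 0 (φ (s h) x) = eW (t h) 0 (φ (t h) (eVinv (t h) 0 (aV h 0 x))) := by
    intro h x
    have := congrArg (fun f => f h x) hd0
    simp only [d0, LinearMap.sub_apply, LinearMap.comp_apply, Pi.zero_apply,
      LinearMap.zero_apply] at this
    exact sub_eq_zero.mp this
  -- Φ intertwines a at level 0
  have hΦa0 : ∀ (h : H) (x : V (s h) 0),
      Φ (t h) 1 (aV h 0 x) = aW h 0 (Φ (s h) 0 x) := by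
    intro h x
    rw [hΦS, hΦ0]
    simp only [LinearMap.comp_apply]
    rw [hΦ0, ← hd0' h x]
  -- eVinv intertwines aV downwards
  have hinvA : ∀ (h : H) (x : V (s h) 1),
      eVinv (t h) 1 (aV h 1 x) = aV h 0 (eVinv (s h) 0 x) := by
    intro h x
    have hx : x = eV (s h) 0 (eVinv (s h) 0 x) := (hei (s h) 0 (by norm_num) x).symm
    conv_lhs => rw [hx]
    have hR2 := congrArg (fun f => f (eVinv (s h) 0 x)) (hR2V h 0 (by norm_num))
    simp only [LinearMap.comp_apply] at hR2
    rw [← hR2, hie (t h) 1 (by norm_num)]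
  -- Φ intertwines a at level 1
  have hΦa1 : ∀ (h : H) (x : V (s h) 1),
      Φ (t h) 2 (aV h 1 x) = aW h 1 (Φ (s h) 1 x) := by
    intro h x
    rw [hΦS (t h) 1, hΦS (s h) 0]
    simp only [LinearMap.comp_apply]
    rw [hinvA h x, hΦa0 h (eVinv (s h) 0 x)]
    have hR2 := congrArg (fun f => f (Φ (s h) 0 (eVinv (s h) 0 x))) (hR2W h 0 (by norm_num))
    simp only [LinearMap.comp_apply] at hR2
    exact hR2
  have hΦa : ∀ (h : H) (n : ℕ), n + 1 ≤ 2 → ∀ x,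
      Φ (t h) (n + 1) (aV h n x) = aW h n (Φ (s h) n x) := by
    intro h n hn x
    have hn' : n ≤ 1 := by omega
    interval_cases n
    · exact hΦa0 h x
    · exact hΦa1 h x
  -- Φ vanishes at ∞
  have hΦinf : ∀ n, Φ inf n = 0 := by
    intro n
    induction n with
    | zero => exact hφinf
    | succ m ih => rw [hΦS, ih]; simp
  -- kernel and range subrepresentations
  set K : ∀ i n, Submodule ℂ (V i n) := fun i n => LinearMap.ker (Φ i n) with hK
  set R : ∀ i n, Submodule ℂ (W i n) := fun i n => LinearMap.range (Φ i n) with hR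
  have hVnontriv : Nontrivial (V inf 0) := by
    have h1 : 0 < finrank ℂ (V inf 0) := by rw [hdiminf 0 (by norm_num)]; norm_num
    exact Module.nontrivial_of_finrank_pos h1
  have hWnontriv : Nontrivial (W inf 0) := by
    have h1 : 0 < finrank ℂ (W inf 0) := by
      rw [← hdim inf 0 (by norm_num), hdiminf 0 (by norm_num)]; norm_num
    exact Module.nontrivial_of_finrank_pos h1
  have hKpos : 0 < thetaVal θc (fun i n => (finrank ℂ (K i n) : ℤ)) := by
    apply hVstab K
    · intro h n hn
      rintro _ ⟨x, hx, rfl⟩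
      have hx' : Φ (s h) n x = 0 := hx
      show Φ (t h) (n + 1) (aV h n x) = 0
      rw [hΦa h n hn x, hx', map_zero]
    · intro i n hn
      rintro _ ⟨x, hx, rfl⟩
      have hx' : Φ i n x = 0 := hx
      show Φ i (n + 1) (eV i n x) = 0
      rw [hΦe i n hn x, hx', map_zero]
    · refine ⟨inf, 0, by norm_num, ?_⟩
      have : K inf 0 = ⊤ := by rw [hK]; simp [hΦinf 0]
      rw [this]
      exact top_ne_bot
    · refine ⟨i0, 0, by norm_num, ?_⟩
      rw [hK]
      simpa [hΦ0, LinearMap.ker_eq_top] using hi0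
  have hRpos : 0 < thetaVal θc (fun i n => (finrank ℂ (R i n) : ℤ)) := by
    apply hWstab R
    · intro h n hn
      rintro _ ⟨_, ⟨x, rfl⟩, rfl⟩
      exact ⟨aV h n x, hΦa h n hn x⟩
    · intro i n hn
      rintro _ ⟨_, ⟨x, rfl⟩, rfl⟩
      exact ⟨eV i n x, hΦe i n hn x⟩
    · refine ⟨i0, 0, by norm_num, ?_⟩
      rw [hR]
      simpa [hΦ0, LinearMap.range_eq_bot] using hi0
    · refine ⟨inf, 0, by norm_num, ?_⟩
      have : R inf 0 = ⊥ := by rw [hR]; simp [hΦinf 0]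
      rw [this]
      exact bot_ne_top
  have hsum : thetaVal θc (fun i n => (finrank ℂ (K i n) : ℤ))
      + thetaVal θc (fun i n => (finrank ℂ (R i n) : ℤ)) = 0 := by
    rw [← hθV]
    simp only [thetaVal, ← Finset.sum_add_distrib, ← mul_add]
    refine Finset.sum_congr rfl fun i _ => Finset.sum_congr rfl fun n _ => ?_
    have key : finrank ℂ (K i n) + finrank ℂ (R i n) = finrank ℂ (V i n) := by
      rw [add_comm]
      exact LinearMap.finrank_range_add_finrank_ker (Φ i n)
    rw [← key]
    push_cast
    ring
  linarith
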